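/- arXiv:1609.08612 — 2 statements merged into one kernel-verified Lean document; each statement's English description precedes it below -/
import Mathlib

section
/- Let f : S¹ → S¹ be a homeomorphism of the unit circle. Then there exists a point ζ ∈ S¹ such that f(-ζ) = -f(ζ). -/
/-!
For a continuous `f : S¹ → S¹`, the function `ζ ↦ Im (f (-ζ) * conj (f ζ))` is odd under
`ζ ↦ -ζ`, so by the intermediate value theorem it vanishes at some `ζ`. There `f (-ζ)` and `f ζ`
are real multiples of each other of equal modulus, so `f (-ζ) = ± f ζ`; injectivity of `f`
excludes the sign `+`, since `-ζ ≠ ζ`.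
-/

open Complex ComplexConjugate Metric

theorem exists_eq_zero_of_comp_eq_neg {X : Type*} [TopologicalSpace X] [PreconnectedSpace X]
    [Nonempty X] {φ : X → ℝ} (hφ : Continuous φ) {σ : X → X} (hσ : ∀ x, φ (σ x) = -φ x) :
    ∃ x, φ x = 0 := by
  obtain ⟨x₀⟩ := ‹Nonempty X›
  rcases le_total (φ x₀) 0 with h | h
  · exact mem_range_of_exists_le_of_exists_ge hφ ⟨x₀, h⟩ ⟨σ x₀, by linarith [hσ x₀]⟩
  · exact mem_range_of_exists_le_of_exists_ge hφ ⟨σ x₀, by linarith [hσ x₀]⟩ ⟨x₀, h⟩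

theorem Complex.eq_or_eq_neg_of_im_mul_conj_eq_zero {a b : ℂ} (ha : ‖a‖ = 1) (hb : ‖b‖ = 1)
    (h : (a * conj b).im = 0) : a = b ∨ a = -b := by
  set r := a * conj b with hr
  have hr_real : r = (r.re : ℂ) := Complex.ext rfl (by simpa using h)
  have hr_abs : |r.re| = 1 := by
    rw [Complex.abs_re_eq_norm.mpr h, hr, norm_mul, RCLike.norm_conj, ha, hb, one_mul]
  have hab : a = r * b := by
    rw [hr, mul_assoc, Complex.conj_mul', hb]; simp
  rcases abs_eq zero_le_one |>.mp hr_abs with h1 | h1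
  · left; rw [hab, hr_real, h1]; simp
  · right; rw [hab, hr_real, h1]; simp

instance : PreconnectedSpace (sphere (0 : ℂ) 1) :=
  Subtype.preconnectedSpace (isConnected_sphere (by simp) 0 zero_le_one).isPreconnected

theorem exists_map_involutive_eq_or_eq_neg {X : Type*} [TopologicalSpace X] [PreconnectedSpace X]
    [Nonempty X] {σ : X → X} (hσ : Continuous σ) (hσσ : Function.Involutive σ)
    {f : X → sphere (0 : ℂ) 1} (hf : Continuous f) :
    ∃ x, f (σ x) = f x ∨ f (σ x) = -f x := by
  have hφ : Continuous fun x ↦ ((f (σ x) : ℂ) * conj (f x : ℂ)).im := by fun_prop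
  obtain ⟨x, hx⟩ := exists_eq_zero_of_comp_eq_neg hφ (σ := σ) (fun x ↦ by
    simp only [hσσ x, ← Complex.conj_im, map_mul, conj_conj, mul_comm])
  refine ⟨x, ?_⟩
  simpa [Subtype.ext_iff] using Complex.eq_or_eq_neg_of_im_mul_conj_eq_zero (by simp) (by simp) hx

/-- Let `f : S¹ → S¹` be a homeomorphism of the unit circle. Then there exists
`ζ ∈ S¹` with `f (-ζ) = - f ζ`. -/
theorem stmt0 (f : Homeomorph (Metric.sphere (0 : ℂ) 1) (Metric.sphere (0 : ℂ) 1)) :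
    ∃ ζ : Metric.sphere (0 : ℂ) 1, f (-ζ) = -(f ζ) := by
  obtain ⟨ζ, h | h⟩ := exists_map_involutive_eq_or_eq_neg continuous_neg neg_involutive f.continuous
  · exact absurd (f.injective h).symm (ne_neg_of_mem_sphere ℂ one_ne_zero ζ)
  · exact ⟨ζ, h⟩
end

section
/- For every t ∈ [1, ∞), the operator norm on ℓᵗ(Fin 2) of the matrix a = (1/2)·[[1+i, 1−i], [1−i, 1+i]] equals 2^{|1/t − 1/2|}. -/
open scoped BigOperators

/-- The `ℓᵖ` norm on `ι → ℂ` for a real exponent `p`. -/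
noncomputable def pNorm {ι : Type*} [Fintype ι] (p : ℝ) (ξ : ι → ℂ) : ℝ :=
  (∑ i, ‖ξ i‖ ^ p) ^ (1 / p)

/-- The operator norm of a matrix acting on `ℓᵖ(ι)`. -/
noncomputable def opNormLp {ι : Type*} [Fintype ι] (p : ℝ) (M : Matrix ι ι ℂ) : ℝ :=
  sInf {c : ℝ | 0 ≤ c ∧ ∀ ξ : ι → ℂ, pNorm p (M.mulVec ξ) ≤ c * pNorm p ξ}

/-- The matrix `a = (1/2)·[[1+i, 1−i], [1−i, 1+i]]`. -/
noncomputable def aMat : Matrix (Fin 2) (Fin 2) ℂ :=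
  (1 / 2 : ℂ) • !![1 + Complex.I, 1 - Complex.I; 1 - Complex.I, 1 + Complex.I]

/-!
Since `aMat` is unitary it is an isometry of `ℓ²`. On `ℂⁿ` the `ℓᵖ` norms decrease in `p`, and
Hölder's inequality bounds `‖ξ‖_p` by `n ^ (1/p - 1/q) ‖ξ‖_q` for `p ≤ q`; passing through `ℓ²`
therefore bounds the operator norm on `ℓᵗ` by `2 ^ |1/t - 1/2|`. For `t ≤ 2` the bound is attained
at `e₀`, whose image has two entries of modulus `1/√2`; for `t ≥ 2` it is attained at `(1, i)`,
whose image is `(1 + i) e₀`.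
-/

open Matrix

theorem Real.rpow_sum_le_sum_rpow {ι : Type*} (s : Finset ι) {f : ι → ℝ} {r : ℝ}
    (hf : ∀ i ∈ s, 0 ≤ f i) (hr : 0 < r) (hr1 : r ≤ 1) :
    (∑ i ∈ s, f i) ^ r ≤ ∑ i ∈ s, f i ^ r := by
  classical
  induction s using Finset.induction_on with
  | empty => simp [Real.zero_rpow hr.ne']
  | insert a s ha ih =>
    rw [Finset.sum_insert ha, Finset.sum_insert ha]
    have hf' : ∀ i ∈ s, 0 ≤ f i := fun i hi => hf i (Finset.mem_insert_of_mem hi)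
    calc (f a + ∑ i ∈ s, f i) ^ r ≤ f a ^ r + (∑ i ∈ s, f i) ^ r :=
          Real.rpow_add_le_add_rpow (hf a (Finset.mem_insert_self a s))
            (Finset.sum_nonneg hf') hr.le hr1
      _ ≤ f a ^ r + ∑ i ∈ s, f i ^ r := by gcongr; exact ih hf'

section pNorm

variable {ι : Type*} [Fintype ι] {p q : ℝ}

theorem pNorm_le_pNorm (hp : 0 < p) (hpq : p ≤ q) (ξ : ι → ℂ) : pNorm q ξ ≤ pNorm p ξ := by
  have hq : 0 < q := hp.trans_le hpq
  have hsum : (∑ i, ‖ξ i‖ ^ q) ^ (p / q) ≤ ∑ i, ‖ξ i‖ ^ p := by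
    refine (Real.rpow_sum_le_sum_rpow _ (fun i _ => by positivity) (div_pos hp hq)
      ((div_le_one hq).mpr hpq)).trans_eq (Finset.sum_congr rfl fun i _ => ?_)
    rw [← Real.rpow_mul (norm_nonneg _), mul_div_cancel₀ _ hq.ne']
  calc pNorm q ξ = ((∑ i, ‖ξ i‖ ^ q) ^ (p / q)) ^ (1 / p) := by
        rw [pNorm, ← Real.rpow_mul (by positivity)]
        congr 1
        field_simp
    _ ≤ pNorm p ξ := by unfold pNorm; gcongr

theorem pNorm_le_card_rpow_mul_pNorm (hp : 0 < p) (hpq : p ≤ q) (ξ : ι → ℂ) :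
    pNorm p ξ ≤ (Fintype.card ι : ℝ) ^ (1 / p - 1 / q) * pNorm q ξ := by
  have hq : 0 < q := hp.trans_le hpq
  have hsum : (∑ i, ‖ξ i‖ ^ p) ^ (q / p) ≤
      (Fintype.card ι : ℝ) ^ (q / p - 1) * ∑ i, ‖ξ i‖ ^ q := by
    refine (Real.rpow_sum_le_const_mul_sum_rpow_of_nonneg _ ((one_le_div hp).mpr hpq)
      (fun i _ => by positivity)).trans_eq ?_
    congr 1
    refine Finset.sum_congr rfl fun i _ => ?_
    rw [← Real.rpow_mul (norm_nonneg _), mul_div_cancel₀ _ hp.ne']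
  calc pNorm p ξ = ((∑ i, ‖ξ i‖ ^ p) ^ (q / p)) ^ (1 / q) := by
        rw [pNorm, ← Real.rpow_mul (by positivity)]
        congr 1
        field_simp
    _ ≤ ((Fintype.card ι : ℝ) ^ (q / p - 1) * ∑ i, ‖ξ i‖ ^ q) ^ (1 / q) := by gcongr
    _ = (Fintype.card ι : ℝ) ^ (1 / p - 1 / q) * pNorm q ξ := by
        rw [Real.mul_rpow (by positivity) (by positivity), ← Real.rpow_mul (by positivity), pNorm]
        congr 2
        field_simp

theorem pNorm_single [DecidableEq ι] (hp : 0 < p) (i : ι) (z : ℂ) :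
    pNorm p (Pi.single i z) = ‖z‖ := by
  rw [pNorm, Finset.sum_eq_single i (fun j _ hj => by simp [hj, Real.zero_rpow hp.ne'])
    (by simp), Pi.single_eq_same, ← Real.rpow_mul (norm_nonneg _), mul_one_div_cancel hp.ne',
    Real.rpow_one]

theorem pNorm_of_forall_norm_eq (hp : p ≠ 0) {ξ : ι → ℂ} {r : ℝ} (hr : 0 ≤ r)
    (hξ : ∀ i, ‖ξ i‖ = r) : pNorm p ξ = (Fintype.card ι : ℝ) ^ (1 / p) * r := by
  rw [pNorm, Finset.sum_congr rfl fun i _ => by rw [hξ i], Finset.sum_const, Finset.card_univ,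
    nsmul_eq_mul, Real.mul_rpow (by positivity) (by positivity), ← Real.rpow_mul hr,
    mul_one_div_cancel hp, Real.rpow_one]

theorem sum_norm_sq_mulVec_of_mem_unitaryGroup [DecidableEq ι] {M : Matrix ι ι ℂ}
    (hM : M ∈ unitaryGroup ι ℂ) (ξ : ι → ℂ) :
    ∑ i, ‖(M *ᵥ ξ) i‖ ^ 2 = ∑ i, ‖ξ i‖ ^ 2 := by
  have hdot : ∀ v : ι → ℂ, star v ⬝ᵥ v = ((∑ i, ‖v i‖ ^ 2 : ℝ) : ℂ) := fun v => by
    simp [dotProduct, Complex.conj_mul']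
  have hMM : Mᴴ * M = 1 := mem_unitaryGroup_iff'.mp hM
  have key : star (M *ᵥ ξ) ⬝ᵥ (M *ᵥ ξ) = star ξ ⬝ᵥ ξ := by
    rw [star_mulVec, dotProduct_mulVec, vecMul_vecMul, hMM, vecMul_one]
  exact_mod_cast (hdot _).symm.trans (key.trans (hdot ξ))

theorem pNorm_two_mulVec_of_mem_unitaryGroup [DecidableEq ι] {M : Matrix ι ι ℂ}
    (hM : M ∈ unitaryGroup ι ℂ) (ξ : ι → ℂ) : pNorm 2 (M *ᵥ ξ) = pNorm 2 ξ := by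
  simp only [pNorm, Real.rpow_two, sum_norm_sq_mulVec_of_mem_unitaryGroup hM]

theorem pNorm_mulVec_le_of_mem_unitaryGroup [DecidableEq ι] {M : Matrix ι ι ℂ}
    (hM : M ∈ unitaryGroup ι ℂ) (hp : 0 < p) (ξ : ι → ℂ) :
    pNorm p (M *ᵥ ξ) ≤ (Fintype.card ι : ℝ) ^ |1 / p - 1 / 2| * pNorm p ξ := by
  rcases le_total p 2 with hp2 | hp2
  · rw [abs_of_nonneg (sub_nonneg.mpr (one_div_le_one_div_of_le hp hp2))]
    calc pNorm p (M *ᵥ ξ) ≤ (Fintype.card ι : ℝ) ^ (1 / p - 1 / 2) * pNorm 2 (M *ᵥ ξ) :=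
          pNorm_le_card_rpow_mul_pNorm hp hp2 _
      _ = (Fintype.card ι : ℝ) ^ (1 / p - 1 / 2) * pNorm 2 ξ := by
          rw [pNorm_two_mulVec_of_mem_unitaryGroup hM]
      _ ≤ (Fintype.card ι : ℝ) ^ (1 / p - 1 / 2) * pNorm p ξ := by
          gcongr; exact pNorm_le_pNorm hp hp2 ξ
  · rw [abs_of_nonpos (sub_nonpos.mpr (one_div_le_one_div_of_le two_pos hp2)), neg_sub]
    calc pNorm p (M *ᵥ ξ) ≤ pNorm 2 (M *ᵥ ξ) := pNorm_le_pNorm two_pos hp2 _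
      _ = pNorm 2 ξ := pNorm_two_mulVec_of_mem_unitaryGroup hM ξ
      _ ≤ (Fintype.card ι : ℝ) ^ (1 / 2 - 1 / p) * pNorm p ξ :=
          pNorm_le_card_rpow_mul_pNorm two_pos hp2 ξ

theorem opNormLp_eq_of_le_of_eq {M : Matrix ι ι ℂ} {C : ℝ} (hC : 0 ≤ C)
    (hle : ∀ ξ, pNorm p (M *ᵥ ξ) ≤ C * pNorm p ξ) {ξ₀ : ι → ℂ} (hξ₀ : 0 < pNorm p ξ₀)
    (heq : pNorm p (M *ᵥ ξ₀) = C * pNorm p ξ₀) : opNormLp p M = C :=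
  IsLeast.csInf_eq ⟨⟨hC, hle⟩, fun _ hc => le_of_mul_le_mul_right (heq ▸ hc.2 ξ₀) hξ₀⟩

end pNorm

theorem aMat_mem_unitaryGroup : aMat ∈ unitaryGroup (Fin 2) ℂ := by
  rw [mem_unitaryGroup_iff']
  ext i j
  fin_cases i <;> fin_cases j <;> norm_num [aMat, mul_apply, Fin.sum_univ_two, Complex.ext_iff]

theorem aMat_mulVec_single :
    aMat *ᵥ Pi.single 0 1 = ![(1 + Complex.I) / 2, (1 - Complex.I) / 2] := by
  ext i
  fin_cases i <;> simp [aMat, mulVec, dotProduct, Fin.sum_univ_two, div_eq_inv_mul]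

theorem aMat_mulVec_one_I : aMat *ᵥ ![1, Complex.I] = Pi.single 0 (1 + Complex.I) := by
  ext i
  fin_cases i <;> simp [aMat, mulVec, dotProduct, Fin.sum_univ_two, Complex.ext_iff]
  norm_num

theorem norm_one_add_I : ‖1 + Complex.I‖ = √2 := by
  norm_num [Complex.norm_def, Complex.normSq_apply]

theorem norm_one_sub_I : ‖1 - Complex.I‖ = √2 := by
  norm_num [Complex.norm_def, Complex.normSq_apply]

theorem pNorm_aMat_mulVec_single {p : ℝ} (hp : 0 < p) :
    pNorm p (aMat *ᵥ Pi.single 0 1) =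
      2 ^ (1 / p - 1 / 2) * pNorm p (Pi.single 0 1 : Fin 2 → ℂ) := by
  have hnorm : ∀ i : Fin 2, ‖![(1 + Complex.I) / 2, (1 - Complex.I) / 2] i‖ = √2 / 2 := by
    intro i; fin_cases i <;> simp [norm_one_add_I, norm_one_sub_I]
  rw [aMat_mulVec_single, pNorm_of_forall_norm_eq hp.ne' (by positivity) hnorm, pNorm_single hp,
    Real.rpow_sub two_pos, ← Real.sqrt_eq_rpow, Fintype.card_fin, Nat.cast_ofNat]
  field_simp
  rw [Real.sq_sqrt zero_le_two, norm_one, mul_one]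

theorem pNorm_aMat_mulVec_one_I {p : ℝ} (hp : 0 < p) :
    pNorm p (aMat *ᵥ ![1, Complex.I]) = 2 ^ (1 / 2 - 1 / p) * pNorm p ![1, Complex.I] := by
  have hnorm : ∀ i : Fin 2, ‖![1, Complex.I] i‖ = 1 := by
    intro i; fin_cases i <;> simp
  rw [aMat_mulVec_one_I, pNorm_single hp, pNorm_of_forall_norm_eq hp.ne' zero_le_one hnorm,
    Real.rpow_sub two_pos, ← Real.sqrt_eq_rpow, norm_one_add_I, Fintype.card_fin, Nat.cast_ofNat,
    mul_one]
  exact (div_mul_cancel₀ _ (by positivity : (2 : ℝ) ^ (1 / p) ≠ 0)).symm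

theorem exists_pNorm_aMat_mulVec_eq {p : ℝ} (hp : 0 < p) :
    ∃ ξ, 0 < pNorm p ξ ∧ pNorm p (aMat *ᵥ ξ) = 2 ^ |1 / p - 1 / 2| * pNorm p ξ := by
  rcases le_total p 2 with hp2 | hp2
  · rw [abs_of_nonneg (sub_nonneg.mpr (one_div_le_one_div_of_le hp hp2))]
    exact ⟨Pi.single 0 1, by simp [pNorm_single hp], pNorm_aMat_mulVec_single hp⟩
  · rw [abs_of_nonpos (sub_nonpos.mpr (one_div_le_one_div_of_le two_pos hp2)), neg_sub]
    refine ⟨![1, Complex.I], ?_, pNorm_aMat_mulVec_one_I hp⟩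
    rw [pNorm_of_forall_norm_eq hp.ne' zero_le_one fun i => by fin_cases i <;> simp]
    positivity

/-- For every `t ∈ [1, ∞)`, the operator norm of `a` on `ℓᵗ(Fin 2)` equals
`2 ^ |1/t − 1/2|`. -/
theorem stmt2 (t : ℝ) (ht : 1 ≤ t) :
    opNormLp t aMat = (2 : ℝ) ^ |1 / t - 1 / 2| := by
  have ht0 : 0 < t := one_pos.trans_le ht
  obtain ⟨ξ₀, hξ₀, heq⟩ := exists_pNorm_aMat_mulVec_eq ht0
  refine opNormLp_eq_of_le_of_eq (by positivity) (fun ξ => ?_) hξ₀ heq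
  simpa using pNorm_mulVec_le_of_mem_unitaryGroup aMat_mem_unitaryGroup ht0 ξ
end
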